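/- arXiv:1302.6497 — 9 statements merged into one kernel-verified Lean document; each statement's English description precedes it below -/
import Mathlib

section
/- Let $(a,B)$ be an $n$-color vertex coloring model with $a \in (\mathbb{C}^*)^n$ and $B \in \mathbb{C}^{n\times n}$ symmetric, and suppose $B = U^T U$ for a $k \times n$ complex matrix $U$ with columns $u_1,\ldots,u_n$. Define the edge coloring model $h := \sum_{i=1}^n a_i \,\mathrm{ev}_{u_i}$, where $\mathrm{ev}_u(p) = p(u)$ for polynomials $p$ in $k$ variables. Then for every finite graph $G$ (multiple edges and loops allowed), the partition function of the vertex coloring model equals the partition function of the edge coloring model: $p_{a,B}(G) = p_h(G)$. -/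
open Matrix MvPolynomial BigOperators

/-- A finite graph, possibly with multiple edges and loops: a finite vertex type,
a finite edge type, and an (arbitrarily oriented) pair of endpoints for each edge. -/
structure MultiGraph where
  V : Type
  E : Type
  [fV : Fintype V]
  [fE : Fintype E]
  [dV : DecidableEq V]
  [dE : DecidableEq E]
  ends : E → V × V

attribute [instance] MultiGraph.fV MultiGraph.fE MultiGraph.dV MultiGraph.dE

/-- Partition function of a vertex coloring model `(a, B)` with color set `S`. -/
noncomputable def vertexPF {S : Type} [Fintype S] (a : S → ℂ)
    (B : Matrix S S ℂ) (G : MultiGraph) : ℂ :=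
  ∑ φ : G.V → S, (∏ v, a (φ v)) * ∏ e, B (φ (G.ends e).1) (φ (G.ends e).2)

/-- The number of times edge `e` is incident with vertex `v` (a loop counts twice). -/
def MultiGraph.inc (G : MultiGraph) (e : G.E) (v : G.V) : ℕ :=
  (if (G.ends e).1 = v then 1 else 0) + (if (G.ends e).2 = v then 1 else 0)

/-- Partition function of a `k`-color edge coloring model `h`. -/
noncomputable def edgePF {k : ℕ} (h : MvPolynomial (Fin k) ℂ →ₗ[ℂ] ℂ)
    (G : MultiGraph) : ℂ :=
  ∑ φ : G.E → Fin k, ∏ v, h (∏ e, (X (φ e) : MvPolynomial (Fin k) ℂ) ^ (G.inc e v))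

/-- Szegedy's lemma: if `B = Uᵀ U`, then the partition function of the vertex coloring
model `(a, B)` equals that of the edge coloring model `h = ∑ i, a i • ev_{u i}`,
where the `u i` are the columns of `U`. -/
theorem vertexPF_eq_edgePF {n k : ℕ} (a : Fin n → ℂ) (ha : ∀ i, a i ≠ 0)
    (U : Matrix (Fin k) (Fin n) ℂ) (B : Matrix (Fin n) (Fin n) ℂ)
    (hB : B.IsSymm) (hBU : B = Uᵀ * U) (G : MultiGraph) :
    vertexPF a B G =
      edgePF (∑ i, a i •
        ((aeval (fun t => U t i) : MvPolynomial (Fin k) ℂ →ₐ[ℂ] ℂ)).toLinearMap) G := by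
  classical
  unfold vertexPF edgePF
  have hval : ∀ (φ : G.E → Fin k) (v : G.V),
      (∑ i, a i • ((aeval (fun t => U t i) : MvPolynomial (Fin k) ℂ →ₐ[ℂ] ℂ)).toLinearMap)
        (∏ e, (X (φ e) : MvPolynomial (Fin k) ℂ) ^ (G.inc e v))
      = ∑ i, a i * ∏ e, (U (φ e) i) ^ (G.inc e v) := by
    intro φ v
    simp [LinearMap.sum_apply, map_prod, smul_eq_mul]
  simp only [hval]
  have key : ∀ (ψ : G.V → Fin n) (e : G.E),
      (∑ c : Fin k, ∏ v, (U c (ψ v)) ^ (G.inc e v))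
        = B (ψ (G.ends e).1) (ψ (G.ends e).2) := by
    intro ψ e
    have : ∀ c : Fin k, (∏ v, (U c (ψ v)) ^ (G.inc e v))
        = U c (ψ (G.ends e).1) * U c (ψ (G.ends e).2) := by
      intro c
      simp only [MultiGraph.inc, pow_add, Finset.prod_mul_distrib]
      congr 1
      · rw [Finset.prod_congr rfl (g := fun v => if (G.ends e).1 = v then U c (ψ v) else 1)
          (fun v _ => by by_cases h : (G.ends e).1 = v <;> simp [h]), Finset.prod_ite_eq]
        simp
      · rw [Finset.prod_congr rfl (g := fun v => if (G.ends e).2 = v then U c (ψ v) else 1)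
          (fun v _ => by by_cases h : (G.ends e).2 = v <;> simp [h]), Finset.prod_ite_eq]
        simp
    simp only [this, hBU, Matrix.mul_apply, Matrix.transpose_apply]
  calc
    ∑ ψ : G.V → Fin n, (∏ v, a (ψ v)) * ∏ e, B (ψ (G.ends e).1) (ψ (G.ends e).2)
        = ∑ ψ : G.V → Fin n, (∏ v, a (ψ v)) *
            ∏ e, ∑ c : Fin k, ∏ v, (U c (ψ v)) ^ (G.inc e v) := by
          simp only [key]
    _ = ∑ ψ : G.V → Fin n, (∏ v, a (ψ v)) *
            ∑ φ : G.E → Fin k, ∏ e, ∏ v, (U (φ e) (ψ v)) ^ (G.inc e v) := by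
          refine Finset.sum_congr rfl fun ψ _ => ?_
          rw [Finset.prod_univ_sum]
          rw [← Fintype.piFinset_univ]
    _ = ∑ φ : G.E → Fin k, ∑ ψ : G.V → Fin n, (∏ v, a (ψ v)) *
            ∏ v, ∏ e, (U (φ e) (ψ v)) ^ (G.inc e v) := by
          simp only [Finset.mul_sum]
          rw [Finset.sum_comm]
          refine Finset.sum_congr rfl fun φ _ => Finset.sum_congr rfl fun ψ _ => ?_
          rw [Finset.prod_comm]
    _ = ∑ φ : G.E → Fin k, ∑ ψ : G.V → Fin n,
            ∏ v, (a (ψ v) * ∏ e, (U (φ e) (ψ v)) ^ (G.inc e v)) := by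
          simp [Finset.prod_mul_distrib]
    _ = ∑ φ : G.E → Fin k, ∏ v, ∑ i : Fin n,
            (a i * ∏ e, (U (φ e) i) ^ (G.inc e v)) := by
          refine Finset.sum_congr rfl fun φ _ => ?_
          rw [Finset.prod_univ_sum, ← Fintype.piFinset_univ]
end

section
/- Let $(a,B)$ be an $n$-color vertex coloring model and suppose indices $i \neq j$ satisfy: the $i$th row of $B$ equals the $j$th row of $B$ (twins), and $a_i + a_j \neq 0$. Let $B'$ be obtained from $B$ by deleting row and column $i$, and let $a'$ be obtained from $a$ by replacing $a_j$ with $a_i + a_j$ and deleting the $i$th entry. Then the partition functions satisfy $p_{a',B'}(H) = p_{a,B}(H)$ for every graph $H$. -/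
open Matrix BigOperators

/-- Removing a twin `i` of `j` with `a i + a j ≠ 0` (adding its weight to `a j`)
does not change the partition function. -/
theorem vertexPF_remove_twin {n : ℕ} (a : Fin n → ℂ) (ha : ∀ i, a i ≠ 0)
    (B : Matrix (Fin n) (Fin n) ℂ) (hB : B.IsSymm)
    (i j : Fin n) (hij : i ≠ j) (htwin : ∀ m, B i m = B j m)
    (hsum : a i + a j ≠ 0) (H : MultiGraph) :
    vertexPF
      (fun p : {m : Fin n // m ≠ i} => if (p : Fin n) = j then a i + a j else a (p : Fin n))
      (Matrix.of fun p q : {m : Fin n // m ≠ i} => B (p : Fin n) (q : Fin n)) H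
      = vertexPF a B H := by
  classical
  have hji : j ≠ i := hij.symm
  set f : Fin n → {m : Fin n // m ≠ i} :=
    fun k => if h : k = i then ⟨j, hji⟩ else ⟨k, h⟩ with hf
  -- row/column twin facts
  have hcol : ∀ m, B m i = B m j := by
    intro m
    have h1 : B m i = B i m := by rw [← hB.apply]
    have h2 : B m j = B j m := by rw [← hB.apply]
    rw [h1, h2, htwin]
  have hrow : ∀ k m, B (f k : Fin n) m = B k m := by
    intro k m
    by_cases h : k = i
    · subst h; simp only [hf, dif_pos]; exact (htwin m).symm
    · simp only [hf, dif_neg h]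
  have hB2 : ∀ k l, B (f k : Fin n) (f l : Fin n) = B k l := by
    intro k l
    rw [hrow]
    by_cases h : l = i
    · subst h; simp only [hf, dif_pos]; exact (hcol k).symm
    · simp only [hf, dif_neg h]
  -- fiber sums of a
  have key : ∀ q : {m : Fin n // m ≠ i},
      ∑ k ∈ Finset.univ.filter (fun k => f k = q), a k
        = (if (q : Fin n) = j then a i + a j else a (q : Fin n)) := by
    intro q
    by_cases hq : (q : Fin n) = j
    · have hq' : q = ⟨j, hji⟩ := Subtype.ext hq
      have : Finset.univ.filter (fun k => f k = q) = {i, j} := by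
        ext k
        simp only [Finset.mem_filter, Finset.mem_univ, true_and, Finset.mem_insert,
          Finset.mem_singleton, hq']
        constructor
        · intro h
          by_cases hk : k = i
          · exact Or.inl hk
          · right
            simpa only [hf, dif_neg hk, Subtype.mk.injEq] using h
        · rintro (rfl | rfl)
          · simp [hf]
          · simp [hf, hji]
      rw [this, if_pos hq, Finset.sum_insert (by simpa using hij), Finset.sum_singleton]
    · have : Finset.univ.filter (fun k => f k = q) = {(q : Fin n)} := by
        ext k
        simp only [Finset.mem_filter, Finset.mem_univ, true_and, Finset.mem_singleton]
        constructor
        · intro h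
          by_cases hk : k = i
          · exfalso; apply hq
            have hk' : f k = ⟨j, hji⟩ := by simp [hf, hk]
            rw [← h, hk']
          · simpa only [hf, dif_neg hk, Subtype.ext_iff] using h
        · rintro rfl
          simp only [hf, dif_neg q.2]
      rw [this, if_neg hq, Finset.sum_singleton]
  -- main computation
  unfold vertexPF
  rw [← Finset.sum_fiberwise Finset.univ (fun φ : H.V → Fin n => f ∘ φ)
    (fun φ => (∏ v, a (φ v)) * ∏ e, B (φ (H.ends e).1) (φ (H.ends e).2))]
  apply Finset.sum_congr rfl
  intro ψ _
  have hedge : ∀ φ ∈ Finset.univ.filter (fun φ : H.V → Fin n => f ∘ φ = ψ),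
      (∏ v, a (φ v)) * ∏ e, B (φ (H.ends e).1) (φ (H.ends e).2)
        = (∏ v, a (φ v)) *
          ∏ e, (Matrix.of fun p q : {m : Fin n // m ≠ i} => B (p : Fin n) (q : Fin n))
            (ψ (H.ends e).1) (ψ (H.ends e).2) := by
    intro φ hφ
    simp only [Finset.mem_filter, Finset.mem_univ, true_and] at hφ
    congr 1
    apply Finset.prod_congr rfl
    intro e _
    have h1 : ψ (H.ends e).1 = f (φ (H.ends e).1) := by rw [← hφ]; rfl
    have h2 : ψ (H.ends e).2 = f (φ (H.ends e).2) := by rw [← hφ]; rfl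
    rw [h1, h2]
    simp only [Matrix.of_apply]
    exact (hB2 _ _).symm
  rw [Finset.sum_congr rfl hedge, ← Finset.sum_mul]
  congr 1
  have hfib : Finset.univ.filter (fun φ : H.V → Fin n => f ∘ φ = ψ)
      = Fintype.piFinset (fun v => Finset.univ.filter (fun k => f k = ψ v)) := by
    ext φ
    simp only [Finset.mem_filter, Finset.mem_univ, true_and, Fintype.mem_piFinset]
    exact ⟨fun h v => congrFun h v, fun h => funext h⟩
  rw [hfib, ← Finset.prod_univ_sum]
  exact Finset.prod_congr rfl fun v _ => (key (ψ v)).symm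
end

section
/- Let $(a,B)$ be an $n$-color vertex coloring model and suppose indices $i \neq j$ are twins (the $i$th and $j$th rows of $B$ are equal) with $a_i + a_j = 0$. Let $B'$ be obtained from $B$ by deleting rows and columns $i$ and $j$, and $a'$ from $a$ by deleting entries $i$ and $j$. Then $p_{a',B'}(H) = p_{a,B}(H)$ for every graph $H$. -/
open Matrix BigOperators

/-! Pulling the edge matrix back along a map of colours `π` is the same as pushing the vertex
weights forward along `π` (`vertexPF_submatrix`). Twin rows of a symmetric `B` mean that `B` is
its own pullback along the map merging colour `j` into `i`, and pushing `a` forward along that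
map puts the weight `a i + a j = 0` on `i` and `0` on `j`. Deleting colours is the pullback along
an inclusion, i.e. extending the weights by zero, so both sides are the partition function of `B`
with the weights of `a` killed on `{i, j}`. -/

theorem vertexPF_submatrix {S T : Type} [Fintype S] [Fintype T] [DecidableEq T] (π : S → T)
    (a : S → ℂ) (B : Matrix T T ℂ) (G : MultiGraph) :
    vertexPF a (B.submatrix π π) G = vertexPF (fun t => ∑ s with π s = t, a s) B G := by
  have fiber_eq (ψ : G.V → T) :
      Fintype.piFinset (fun v => {s | π s = ψ v}) = Finset.univ.filter (π ∘ · = ψ) := by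
    ext φ
    simp [funext_iff]
  calc vertexPF a (B.submatrix π π) G
      = ∑ ψ : G.V → T, ∑ φ : G.V → S with π ∘ φ = ψ,
          (∏ v, a (φ v)) * ∏ e, B (ψ (G.ends e).1) (ψ (G.ends e).2) := by
        rw [vertexPF, ← Finset.sum_fiberwise _ (π ∘ ·)]
        refine Finset.sum_congr rfl fun ψ _ => Finset.sum_congr rfl fun φ hφ => ?_
        rw [← (Finset.mem_filter.mp hφ).2]
        rfl
    _ = vertexPF (fun t => ∑ s with π s = t, a s) B G := by
        refine Finset.sum_congr rfl fun ψ _ => ?_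
        rw [Finset.prod_univ_sum, fiber_eq, Finset.sum_mul]

theorem sum_filter_subtype_val_eq {T M : Type*} [Fintype T] [DecidableEq T] [AddCommMonoid M]
    (p : T → Prop) [DecidablePred p] (f : T → M) (t : T) :
    ∑ s ∈ Finset.univ.filter (fun s : {x // p x} => s.1 = t), f s = if p t then f t else 0 := by
  split_ifs with ht
  · rw [Finset.sum_eq_single_of_mem ⟨t, ht⟩ (by simp)]
    intro s hs hne
    exact absurd (Subtype.ext (Finset.mem_filter.mp hs).2) hne
  · refine Finset.sum_eq_zero fun s hs => absurd ?_ ht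
    exact (Finset.mem_filter.mp hs).2 ▸ s.2

theorem Matrix.submatrix_update_id_of_twins {S α : Type*} [DecidableEq S] {B : Matrix S S α}
    (hB : B.IsSymm) {i j : S} (htwin : ∀ m, B i m = B j m) :
    B.submatrix (Function.update id j i) (Function.update id j i) = B := by
  have row (x y : S) : B (Function.update id j i x) y = B x y := by
    rcases eq_or_ne x j with rfl | hx
    · simp [htwin]
    · simp [hx]
  ext x y
  rw [submatrix_apply, row, ← hB.apply, row, hB.apply]

theorem sum_filter_update_id_eq {S M : Type*} [Fintype S] [DecidableEq S] [AddCommMonoid M]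
    {i j : S} (hij : i ≠ j) (f : S → M) (t : S) :
    ∑ s with Function.update id j i s = t, f s =
      if t = i then f i + f j else if t = j then 0 else f t := by
  have fiber : Finset.univ.filter (Function.update id j i · = t) =
      if t = i then {i, j} else if t = j then ∅ else {t} := by
    ext s
    rcases eq_or_ne s j with rfl | hs <;> split_ifs <;> simp_all [eq_comm]
  rw [fiber]
  split_ifs <;> simp [Finset.sum_pair hij]

theorem vertexPF_remove_cancelling_twins_general {n : ℕ} (a : Fin n → ℂ)
    (B : Matrix (Fin n) (Fin n) ℂ) (hB : B.IsSymm)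
    (i j : Fin n) (hij : i ≠ j) (htwin : ∀ m, B i m = B j m)
    (hsum : a i + a j = 0) (H : MultiGraph) :
    vertexPF
      (fun p : {m : Fin n // m ≠ i ∧ m ≠ j} => a (p : Fin n))
      (Matrix.of fun p q : {m : Fin n // m ≠ i ∧ m ≠ j} => B (p : Fin n) (q : Fin n)) H
      = vertexPF a B H := by
  have merged_weights : (fun t => if t ≠ i ∧ t ≠ j then a t else 0) =
      fun t => ∑ s with Function.update id j i s = t, a s := by
    funext t
    rw [sum_filter_update_id_eq hij]
    split_ifs <;> simp_all
  calc vertexPF _ (B.submatrix Subtype.val Subtype.val) H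
      = vertexPF (fun t => if t ≠ i ∧ t ≠ j then a t else 0) B H := by
        rw [vertexPF_submatrix]
        simp only [sum_filter_subtype_val_eq]
    _ = vertexPF a (B.submatrix (Function.update id j i) (Function.update id j i)) H := by
        rw [merged_weights, vertexPF_submatrix]
    _ = vertexPF a B H := by
        rw [Matrix.submatrix_update_id_of_twins hB htwin]

/-- Removing twins `i ≠ j` with `a i + a j = 0` (deleting both rows/columns and
both weights) does not change the partition function. -/
theorem vertexPF_remove_cancelling_twins {n : ℕ} (a : Fin n → ℂ) (ha : ∀ i, a i ≠ 0)
    (B : Matrix (Fin n) (Fin n) ℂ) (hB : B.IsSymm)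
    (i j : Fin n) (hij : i ≠ j) (htwin : ∀ m, B i m = B j m)
    (hsum : a i + a j = 0) (H : MultiGraph) :
    vertexPF
      (fun p : {m : Fin n // m ≠ i ∧ m ≠ j} => a (p : Fin n))
      (Matrix.of fun p q : {m : Fin n // m ≠ i ∧ m ≠ j} => B (p : Fin n) (q : Fin n)) H
      = vertexPF a B H :=
  vertexPF_remove_cancelling_twins_general a B hB i j hij htwin hsum H
end

section
/- Let $u_1,\ldots,u_n \in \mathbb{C}^k$ be distinct vectors and $a \in (\mathbb{C}^*)^n$, and let $h := \sum_{i=1}^n a_i \,\mathrm{ev}_{u_i}$ be the linear functional on $\mathbb{C}[x_1,\ldots,x_k]$ given by $h(p) = \sum_{i=1}^n a_i p(u_i)$. Then $h$ takes real values on all polynomials with real coefficients if and only if the set $\{(u_i, a_i) \in \mathbb{C}^k \times \mathbb{C} \mid i = 1,\ldots,n\}$ is closed under coordinatewise complex conjugation. -/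
open MvPolynomial BigOperators Finset

/-- Interpolation: if a finite combination of evaluation functionals vanishes on all
polynomials, then the sum of coefficients over each fiber of points vanishes. -/
lemma aux_fiber_sum {k : ℕ} {ι : Type*} [Fintype ι] (v : ι → Fin k → ℂ) (c : ι → ℂ)
    (h : ∀ q : MvPolynomial (Fin k) ℂ, ∑ l, c l * eval (v l) q = 0) (l0 : ι) :
    ∑ l ∈ Finset.univ.filter (fun l => v l = v l0), c l = 0 := by
  classical
  have ht : ∀ j, v j ≠ v l0 → ∃ t, v j t ≠ v l0 t := fun j hj => Function.ne_iff.mp hj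
  set S := Finset.univ.filter (fun j => v j ≠ v l0) with hS
  let t : ∀ j ∈ S, Fin k := fun j hj => (ht j (by simpa [hS] using hj)).choose
  have htt : ∀ j hj, v j (t j hj) ≠ v l0 (t j hj) :=
    fun j hj => (ht j (by simpa [hS] using hj)).choose_spec
  let p : MvPolynomial (Fin k) ℂ := ∏ j ∈ S.attach,
      (C (v l0 (t j j.2) - v j (t j j.2))⁻¹ * (X (t j j.2) - C (v j (t j j.2))))
  have hp0 : eval (v l0) p = 1 := by
    simp only [p, map_prod, map_mul, map_sub, eval_C, eval_X]
    apply Finset.prod_eq_one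
    intro j _
    exact inv_mul_cancel₀ (sub_ne_zero.mpr (fun hh => htt j j.2 hh.symm))
  have hpi : ∀ i, v i ≠ v l0 → eval (v i) p = 0 := by
    intro i hi
    have hiS : i ∈ S := by simp [hS, hi]
    simp only [p, map_prod]
    apply Finset.prod_eq_zero (Finset.mem_attach _ ⟨i, hiS⟩)
    simp
  have := h p
  rw [Finset.sum_congr rfl (fun l _ => show c l * eval (v l) p =
      if v l = v l0 then c l else 0 by
        by_cases hl : v l = v l0
        · rw [if_pos hl, hl, hp0, mul_one]
        · rw [if_neg hl, hpi l hl, mul_zero])] at this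
  rw [Finset.sum_filter]
  exact this

/-- Lemma 4.3: the edge coloring model `h = ∑ i, a i • ev_{u i}` (with distinct `u i`
and nonzero `a i`) is real valued on real polynomials if and only if the set of pairs
`(u i, a i)` is closed under (coordinatewise) complex conjugation. -/
theorem real_valued_iff_conj_closed {n k : ℕ} (u : Fin n → Fin k → ℂ)
    (hu : Function.Injective u) (a : Fin n → ℂ) (ha : ∀ i, a i ≠ 0) :
    (∀ p : MvPolynomial (Fin k) ℝ,
        (∑ i, a i * eval (u i) (p.map (algebraMap ℝ ℂ))).im = 0) ↔
      ∀ i, ∃ j, (∀ t, u j t = starRingEnd ℂ (u i t)) ∧ a j = starRingEnd ℂ (a i) := by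
  classical
  -- basic conjugation computation
  have hconj : ∀ (w : Fin k → ℂ) (p : MvPolynomial (Fin k) ℝ),
      starRingEnd ℂ (eval w (p.map (algebraMap ℝ ℂ)))
        = eval (fun t => starRingEnd ℂ (w t)) (p.map (algebraMap ℝ ℂ)) := by
    intro w p
    rw [eval_map, eval_map]
    have h1 : (eval₂ (algebraMap ℝ ℂ) w p) = eval₂Hom (algebraMap ℝ ℂ) w p := rfl
    have h2 : (eval₂ (algebraMap ℝ ℂ) (fun t => starRingEnd ℂ (w t)) p)
        = eval₂Hom (algebraMap ℝ ℂ) (fun t => starRingEnd ℂ (w t)) p := rfl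
    rw [h1, h2, map_eval₂Hom]
    exact MvPolynomial.eval₂Hom_congr (by ext r; simp [Complex.conj_ofReal]) rfl rfl
  constructor
  · intro h i
    set v : (Fin n ⊕ Fin n) → Fin k → ℂ :=
      Sum.elim (fun j t => starRingEnd ℂ (u j t)) u with hv
    set c : (Fin n ⊕ Fin n) → ℂ :=
      Sum.elim (fun j => starRingEnd ℂ (a j)) (fun j => -(a j)) with hc
    -- h(p) = conj h(p) for all real p
    have key : ∀ p : MvPolynomial (Fin k) ℝ,
        ∑ l, c l * eval (v l) (p.map (algebraMap ℝ ℂ)) = 0 := by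
      intro p
      have hz := h p
      have hre : starRingEnd ℂ (∑ i, a i * eval (u i) (p.map (algebraMap ℝ ℂ)))
          = ∑ i, a i * eval (u i) (p.map (algebraMap ℝ ℂ)) :=
        Complex.conj_eq_iff_im.mpr hz
      rw [map_sum] at hre
      simp only [map_mul, hconj] at hre
      rw [Fintype.sum_sum_type]
      simp only [hv, hc, Sum.elim_inl, Sum.elim_inr, neg_mul]
      rw [hre, ← Finset.sum_add_distrib]
      simp
    -- extend to all complex polynomials
    have hall : ∀ q : MvPolynomial (Fin k) ℂ, ∑ l, c l * eval (v l) q = 0 := by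
      intro q
      conv_lhs => rw [show q = ∑ d ∈ q.support, monomial d (coeff d q) from
        (support_sum_monomial_coeff q).symm]
      rw [Finset.sum_congr rfl fun l _ => by rw [map_sum, Finset.mul_sum]]
      rw [Finset.sum_comm]
      apply Finset.sum_eq_zero
      intro d _
      have hm := key (monomial d 1 : MvPolynomial (Fin k) ℝ)
      have hterm : ∀ l, c l * eval (v l) (monomial d (coeff d q))
          = coeff d q * (c l * eval (v l)
              (MvPolynomial.map (algebraMap ℝ ℂ) (monomial d (1:ℝ)))) := by
        intro l
        rw [map_monomial]
        simp only [eval_monomial, map_one]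
        ring
      rw [Finset.sum_congr rfl fun l _ => hterm l, ← Finset.mul_sum, hm, mul_zero]
    have hsum := aux_fiber_sum v c hall (Sum.inr i)
    have hsplit : ∑ l ∈ univ.filter (fun l => v l = v (Sum.inr i)), c l
        = (∑ j, if (fun t => starRingEnd ℂ (u j t)) = u i then starRingEnd ℂ (a j) else 0)
          + (∑ j, if u j = u i then -(a j) else 0) := by
      rw [Finset.sum_filter, Fintype.sum_sum_type]
      simp only [hv, hc, Sum.elim_inl, Sum.elim_inr]
    have h2 : (∑ j : Fin n, if u j = u i then -(a j) else 0) = -(a i) := by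
      simp only [hu.eq_iff]
      simp
    by_cases hex : ∃ j, (fun t => starRingEnd ℂ (u j t)) = u i
    · obtain ⟨j, hjeq⟩ := hex
      refine ⟨j, fun t => ?_, ?_⟩
      · have := congrFun hjeq t
        rw [← this]
        simp
      · have huniq : ∀ j', ((fun t => starRingEnd ℂ (u j' t)) = u i) ↔ j' = j := by
          intro j'
          constructor
          · intro hh
            apply hu
            funext t
            have e1 := congrFun hh t
            have e2 := congrFun hjeq t
            exact (starRingEnd ℂ).injective (e1.trans e2.symm)
          · rintro rfl; exact hjeq
        have h1 : (∑ j' : Fin n, if (fun t => starRingEnd ℂ (u j' t)) = u i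
            then starRingEnd ℂ (a j') else 0) = starRingEnd ℂ (a j) := by
          simp only [huniq]
          simp
        rw [hsplit, h1, h2] at hsum
        have : starRingEnd ℂ (a j) = a i := by linear_combination hsum
        rw [← this]
        simp
    · exfalso
      have h1 : (∑ j : Fin n, if (fun t => starRingEnd ℂ (u j t)) = u i
          then starRingEnd ℂ (a j) else 0) = 0 :=
        Finset.sum_eq_zero fun j _ => if_neg (fun hh => hex ⟨j, hh⟩)
      rw [hsplit, h1, h2] at hsum
      exact ha i (by linear_combination -hsum)
  · intro h p
    choose j hj1 hj2 using h
    have hjinj : Function.Injective j := by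
      intro i1 i2 he
      apply hu
      funext t
      have e1 := hj1 i1 t
      have e2 := hj1 i2 t
      rw [he] at e1
      exact (starRingEnd ℂ).injective (e1.symm.trans e2)
    have hjbij : Function.Bijective j := (Finite.injective_iff_bijective).mp hjinj
    have hz : starRingEnd ℂ (∑ i, a i * eval (u i) (p.map (algebraMap ℝ ℂ)))
        = ∑ i, a i * eval (u i) (p.map (algebraMap ℝ ℂ)) := by
      rw [map_sum]
      simp only [map_mul, hconj]
      rw [← (Equiv.ofBijective j hjbij).sum_comp
        (fun i => a i * eval (u i) (p.map (algebraMap ℝ ℂ)))]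
      apply Finset.sum_congr rfl
      intro i _
      simp only [Equiv.ofBijective_apply]
      rw [hj2 i]
      congr 1
      have : (fun t => starRingEnd ℂ (u i t)) = u (j i) := funext fun t => (hj1 i t).symm
      rw [this]
    exact Complex.conj_eq_iff_im.mp hz
end

section
/- Let $W \in \mathbb{C}^{l \times n}$ and define $f_W : O_l(\mathbb{C}) \to \mathbb{R}$ by $f_W(g) = \mathrm{tr}((gW)^* gW)$. If $WW^* \in \mathbb{R}^{l \times l}$ (i.e., $WW^*$ has real entries), then $f_W(g) \geq f_W(e)$ for all $g \in O_l(\mathbb{C})$, where $e$ is the identity; that is, $\inf_{g \in O_l(\mathbb{C})} f_W(g) = f_W(e)$. -/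
open Matrix
open scoped ComplexOrder

/-- Lemma 4.2 (i), "if" direction: if `W W*` is real, then the Kempf–Ness function
`f_W(g) = tr((gW)* gW)` on the complex orthogonal group attains its infimum at the
identity, i.e. `f_W(g) ≥ f_W(e)` for all `g ∈ O_l(ℂ)`. -/
theorem kempfNess_min_at_identity {l n : ℕ} (W : Matrix (Fin l) (Fin n) ℂ)
    (hW : ∀ i j, ((W * Wᴴ) i j).im = 0) :
    ∀ g : Matrix (Fin l) (Fin l) ℂ, gᵀ * g = 1 →
      (Wᴴ * W).trace ≤ ((g * W)ᴴ * (g * W)).trace := by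
  intro g hg
  set A := W * Wᴴ with hA
  have hAH : Aᴴ = A := (Matrix.isHermitian_mul_conjTranspose_self W)
  have hAT : Aᵀ = A := by
    ext i j
    have h1 : (starRingEnd ℂ) (A j i) = A i j := congrFun (congrFun hAH i) j
    have h2 : (starRingEnd ℂ) (A j i) = A j i := Complex.conj_eq_iff_im.mpr (hW j i)
    rw [Matrix.transpose_apply]; rw [← h1, h2]
  clear_value A
  -- conjugate matrix
  set c := (gᴴ)ᵀ with hc
  have hcT : cᵀ = gᴴ := by simp [hc]
  have hcH : cᴴ = gᵀ := by ext i j; simp [hc, Matrix.conjTranspose_apply]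
  -- conjugate of the orthogonality relation : gᴴ * c = 1
  have hgc : gᴴ * c = 1 := by
    have := congrArg (fun M : Matrix (Fin l) (Fin l) ℂ => M.map (starRingEnd ℂ)) hg
    simpa [Matrix.map_mul, Matrix.conjTranspose, Matrix.transpose_map, hc] using this
  set D := g - c with hD
  have hDT : Dᵀ = gᵀ - gᴴ := by rw [hD, Matrix.transpose_sub, hcT]
  have hDH : Dᴴ = gᴴ - gᵀ := by rw [hD, Matrix.conjTranspose_sub, hcH]
  -- key matrix identity : 2 gᴴg = 2·1 + gᵀD - Dᵀg + DᴴD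
  have matid : gᴴ * g + gᴴ * g =
      (1 : Matrix (Fin l) (Fin l) ℂ) + 1 + (gᵀ * D - Dᵀ * g + Dᴴ * D) := by
    rw [hDT, hDH, hD]
    rw [Matrix.mul_sub, Matrix.sub_mul, Matrix.sub_mul, Matrix.mul_sub, Matrix.mul_sub]
    rw [hg, hgc]
    abel
  -- trace against A
  have hcancel : ((gᵀ * D) * A).trace = ((Dᵀ * g) * A).trace := by
    calc ((gᵀ * D) * A).trace = (((gᵀ * D) * A)ᵀ).trace := (Matrix.trace_transpose _).symm
      _ = (Aᵀ * (Dᵀ * gᵀᵀ)).trace := by rw [Matrix.transpose_mul, Matrix.transpose_mul]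
      _ = (A * (Dᵀ * g)).trace := by rw [hAT, Matrix.transpose_transpose]
      _ = ((Dᵀ * g) * A).trace := Matrix.trace_mul_comm _ _
  have tkey : ((gᴴ * g) * A).trace + ((gᴴ * g) * A).trace =
      A.trace + A.trace + ((Dᴴ * D) * A).trace := by
    have h := congrArg (fun M : Matrix (Fin l) (Fin l) ℂ => (M * A).trace) matid
    simp only [Matrix.add_mul, Matrix.sub_mul, Matrix.one_mul, Matrix.trace_add,
      Matrix.trace_sub] at h
    rw [h, hcancel]; ring
  -- rewrite both traces
  have e1 : ((g * W)ᴴ * (g * W)).trace = ((gᴴ * g) * A).trace := by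
    rw [Matrix.conjTranspose_mul, ← Matrix.mul_assoc, Matrix.trace_mul_cycle,
      ← Matrix.mul_assoc W Wᴴ gᴴ, Matrix.mul_assoc (W * Wᴴ) gᴴ g,
      Matrix.trace_mul_comm, hA]
  have e2 : ((D * W)ᴴ * (D * W)).trace = ((Dᴴ * D) * A).trace := by
    rw [Matrix.conjTranspose_mul, ← Matrix.mul_assoc, Matrix.trace_mul_cycle,
      ← Matrix.mul_assoc W Wᴴ Dᴴ, Matrix.mul_assoc (W * Wᴴ) Dᴴ D,
      Matrix.trace_mul_comm, hA]
  have e0 : (Wᴴ * W).trace = A.trace := by rw [hA, Matrix.trace_mul_comm]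
  -- nonnegativity of the PSD trace
  have hs : (0 : ℂ) ≤ ((D * W)ᴴ * (D * W)).trace := by
    rw [Matrix.trace]
    apply Finset.sum_nonneg
    intro i _
    rw [Matrix.diag_apply, Matrix.mul_apply]
    apply Finset.sum_nonneg
    intro k _
    rw [Matrix.conjTranspose_apply]
    exact star_mul_self_nonneg _
  rw [e1, e0]
  rw [← e2] at tkey
  rw [Complex.le_def] at hs ⊢
  have h2 := congrArg Complex.re tkey
  have h3 := congrArg Complex.im tkey
  simp only [Complex.add_re, Complex.add_im] at h2 h3
  simp only [Complex.zero_re, Complex.zero_im] at hs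
  obtain ⟨hs1, hs2⟩ := hs
  exact ⟨by linarith, by linarith⟩
end

section
/- Let $W \in \mathbb{C}^{l \times n}$ with $WW^*$ having real entries, and define $f_W(g) = \mathrm{tr}((gW)^* gW)$ on $O_l(\mathbb{C})$. Then for $g \in O_l(\mathbb{C})$, $f_W(g) = f_W(e)$ if and only if $g \in O_l(\mathbb{R}) \cdot \mathrm{Stab}(W)$, where $\mathrm{Stab}(W) = \{g \in O_l(\mathbb{C}) \mid gW = W\}$. -/
open Matrix

/-!
Write `ḡ` for the entrywise conjugate of `g ∈ O_l(ℂ)`. Since `gᴴ = ḡᵀ` and `gᵀ g = ḡᵀ ḡ = 1`,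
expanding `‖(ḡ - g) W‖²` and using that `W Wᴴ` is real symmetric (so `tr(gᵀ ḡ W Wᴴ)` equals its
transpose `tr(gᴴ g W Wᴴ)`) gives `2 f_W(g) = 2 f_W(e) + ‖(ḡ - g) W‖²`. Hence `f_W(g) = f_W(e)`
exactly when `ḡ W = g W`, i.e. when `B W = 0` for `g = A + iB` with `A, B` real.

In that case the real part of `gᵀ g = 1` gives `Aᵀ A = 1 + Bᵀ B`, so the real matrix
`X = [Re W | Im W]` satisfies `(A X)ᵀ (A X) = Xᵀ X`. Matrices with equal Gram matrices differ by
an orthogonal matrix: the isometry `X v ↦ A X v` of the range of `X` extends to all of `ℝˡ`. This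
gives `g₁ ∈ O_l(ℝ)` with `g₁ W = A W = g W`, and `s = g₁ᵀ g` stabilises `W`.
-/

theorem LinearMap.exists_linearIsometry_apply_eq_of_inner_eq {𝕜 M V : Type*} [RCLike 𝕜]
    [AddCommGroup M] [Module 𝕜 M] [NormedAddCommGroup V] [InnerProductSpace 𝕜 V]
    [FiniteDimensional 𝕜 V] (f g : M →ₗ[𝕜] V)
    (h : ∀ x y, inner 𝕜 (f x) (f y) = inner 𝕜 (g x) (g y)) :
    ∃ φ : V →ₗᵢ[𝕜] V, ∀ x, φ (f x) = g x := by
  have hker : LinearMap.ker f ≤ LinearMap.ker g := fun x hx => by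
    rw [LinearMap.mem_ker] at hx ⊢
    rw [← inner_self_eq_zero (𝕜 := 𝕜), ← h, hx, inner_zero_left]
  let ψ : LinearMap.range f →ₗ[𝕜] V :=
    (LinearMap.ker f).liftQ g hker ∘ₗ f.quotKerEquivRange.symm.toLinearMap
  have hψ : ∀ x, ψ ⟨f x, LinearMap.mem_range_self f x⟩ = g x := fun x => by
    simp [ψ, LinearMap.quotKerEquivRange_symm_apply_image]
  let L : LinearMap.range f →ₗᵢ[𝕜] V := ψ.isometryOfInner <| by
    rintro ⟨_, x, rfl⟩ ⟨_, y, rfl⟩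
    rw [hψ, hψ, ← h, Submodule.coe_inner]
  exact ⟨L.extend, fun x => by
    rw [← hψ]
    exact L.extend_apply ⟨f x, LinearMap.mem_range_self f x⟩⟩

theorem Matrix.inner_toEuclideanLin_toEuclideanLin {𝕜 ι m : Type*} [RCLike 𝕜] [Fintype ι]
    [DecidableEq ι] [Fintype m] [DecidableEq m] (X : Matrix ι m 𝕜) (u v : EuclideanSpace 𝕜 m) :
    inner 𝕜 (toEuclideanLin X u) (toEuclideanLin X v) = inner 𝕜 u (toEuclideanLin (Xᴴ * X) v) := by
  rw [toLpLin_mul_same, toEuclideanLin_conjTranspose_eq_adjoint, LinearMap.comp_apply,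
    LinearMap.adjoint_inner_right]

theorem Matrix.exists_mem_unitaryGroup_mul_eq_of_conjTranspose_mul_self_eq {𝕜 ι m : Type*}
    [RCLike 𝕜] [Fintype ι] [DecidableEq ι] [Fintype m] {X Y : Matrix ι m 𝕜}
    (h : Xᴴ * X = Yᴴ * Y) : ∃ Q ∈ unitaryGroup ι 𝕜, Q * X = Y := by
  classical
  obtain ⟨φ, hφ⟩ := LinearMap.exists_linearIsometry_apply_eq_of_inner_eq
    (toEuclideanLin X) (toEuclideanLin Y) fun u v => by
      rw [inner_toEuclideanLin_toEuclideanLin, inner_toEuclideanLin_toEuclideanLin, h]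
  let b := EuclideanSpace.basisFun ι 𝕜
  let Φ := φ.toLinearIsometryEquiv rfl
  refine ⟨LinearMap.toMatrix b.toBasis b.toBasis Φ.toLinearMap,
    Φ.toMatrix_mem_unitaryGroup b b, toEuclideanLin.injective ?_⟩
  ext1 u
  have hQ : toEuclideanLin (LinearMap.toMatrix b.toBasis b.toBasis Φ.toLinearMap) =
      Φ.toLinearMap := by
    rw [toEuclideanLin_eq_toLin_orthonormal, Matrix.toLin_toMatrix]
  rw [toLpLin_mul_same, LinearMap.comp_apply, hQ, ← hφ]
  rfl

theorem Matrix.trace_transpose_mul_of_isSymm {R ι : Type*} [CommSemiring R] [Fintype ι]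
    (M : Matrix ι ι R) {P : Matrix ι ι R} (hP : P.IsSymm) : (Mᵀ * P).trace = (M * P).trace := by
  rw [← trace_transpose, transpose_mul, hP.eq, trace_mul_comm, transpose_transpose]

theorem Matrix.two_mul_trace_conjTranspose_mul_self_of_transpose_mul_self_eq_one
    {R ι κ : Type*} [CommRing R] [StarRing R] [Fintype ι] [DecidableEq ι] [Fintype κ]
    {g : Matrix ι ι R} (hg : gᵀ * g = 1) {W : Matrix ι κ R} (hW : (W * Wᴴ).IsSymm) :
    2 * ((g * W)ᴴ * (g * W)).trace =
      2 * (Wᴴ * W).trace + (((g.map star - g) * W)ᴴ * ((g.map star - g) * W)).trace := by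
  have hcyc : ∀ M : Matrix ι ι R, ((M * W)ᴴ * (M * W)).trace = (Mᴴ * M * (W * Wᴴ)).trace :=
    fun M => by
      rw [conjTranspose_mul, Matrix.mul_assoc, trace_mul_comm, Matrix.mul_assoc,
        Matrix.mul_assoc, Matrix.mul_assoc]
  have hstar : (g.map star)ᴴ = gᵀ := by ext; simp
  have hstar_orth : gᴴ * g.map star = 1 := by
    rw [← conjTranspose_one, ← hg, conjTranspose_mul]
    rfl
  have hN : (g.map star - g)ᴴ * (g.map star - g) = gᵀ * g.map star - 1 - 1 + gᴴ * g := by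
    rw [conjTranspose_sub, hstar, sub_mul, mul_sub, mul_sub, hg, hstar_orth]
    abel
  have htr : (gᵀ * g.map star * (W * Wᴴ)).trace = (gᴴ * g * (W * Wᴴ)).trace := by
    rw [← trace_transpose_mul_of_isSymm _ hW, transpose_mul]
    rfl
  rw [hcyc, hcyc, hN, add_mul, sub_mul, sub_mul, trace_add, trace_sub, trace_sub, htr, one_mul,
    trace_mul_comm Wᴴ]
  ring

section Complex

open Complex
open scoped ComplexOrder

variable {ι κ ν : Type*}

theorem Matrix.map_re_mul [Fintype κ] (M : Matrix ι κ ℂ) (N : Matrix κ ν ℂ) :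
    (M * N).map re = M.map re * N.map re - M.map im * N.map im := by
  ext i j
  simp [mul_apply, re_sum, Finset.sum_sub_distrib]

theorem Matrix.map_im_mul [Fintype κ] (M : Matrix ι κ ℂ) (N : Matrix κ ν ℂ) :
    (M * N).map im = M.map re * N.map im + M.map im * N.map re := by
  ext i j
  simp [mul_apply, im_sum, Finset.sum_add_distrib]

theorem Matrix.ext_re_im {M N : Matrix ι κ ℂ} (hre : M.map re = N.map re)
    (him : M.map im = N.map im) : M = N :=
  ext fun i j => Complex.ext (congrFun₂ hre i j) (congrFun₂ him i j)

theorem Matrix.map_star_map_re (M : Matrix ι κ ℂ) : (M.map star).map re = M.map re := by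
  ext; simp

theorem Matrix.map_star_map_im (M : Matrix ι κ ℂ) : (M.map star).map im = -M.map im := by
  ext; simp

theorem Matrix.map_ofReal_map_re (M : Matrix ι κ ℝ) : (M.map ofReal).map re = M := by
  ext; simp

theorem Matrix.map_ofReal_map_im (M : Matrix ι κ ℝ) : (M.map ofReal).map im = 0 := by
  ext; simp

theorem Matrix.isSymm_of_isHermitian_of_im_eq_zero {P : Matrix ι ι ℂ} (hP : P.IsHermitian)
    (him : ∀ i j, (P i j).im = 0) : P.IsSymm :=
  IsSymm.ext fun i j => by rw [← hP.apply i j]; exact (conj_eq_iff_im.mpr (him j i)).symm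

variable [Fintype ι] [DecidableEq ι] [Fintype κ]

theorem Matrix.trace_conjTranspose_mul_self_eq_iff_map_star_mul_eq {g : Matrix ι ι ℂ}
    (hg : gᵀ * g = 1) {W : Matrix ι κ ℂ} (hW : (W * Wᴴ).IsSymm) :
    ((g * W)ᴴ * (g * W)).trace = (Wᴴ * W).trace ↔ g.map star * W = g * W := by
  have key := two_mul_trace_conjTranspose_mul_self_of_transpose_mul_self_eq_one hg hW
  rw [← sub_eq_zero (a := g.map star * W), ← Matrix.sub_mul,
    ← trace_conjTranspose_mul_self_eq_zero_iff]
  constructor <;> intro h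
  · linear_combination 2 * h - key
  · linear_combination (key + h) / 2

theorem Matrix.exists_real_orthogonal_mul_eq_of_map_star_mul_eq {g : Matrix ι ι ℂ}
    (hg : gᵀ * g = 1) {W : Matrix ι κ ℂ} (h : g.map star * W = g * W) :
    ∃ g₁ : Matrix ι ι ℂ, (∀ i j, (g₁ i j).im = 0) ∧ g₁ᵀ * g₁ = 1 ∧ g₁ * W = g * W := by
  set A := g.map re with hA
  set B := g.map im with hB
  -- a real matrix `Q` agrees with `A` on `W` iff `Q X = A X`
  set X := fromCols (W.map re) (W.map im)
  have hBW : B * W.map re = 0 ∧ B * W.map im = 0 := by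
    have hre := congrArg (map · re) h
    have him := congrArg (map · im) h
    simp only [map_re_mul, map_im_mul, map_star_map_re, map_star_map_im, ← hA, ← hB] at hre him
    constructor <;> ext i j
    · have := congrFun₂ him i j
      simp only [add_apply, Matrix.neg_mul, neg_apply] at this
      rw [zero_apply]
      linarith
    · have := congrFun₂ hre i j
      simp only [sub_apply, Matrix.neg_mul, neg_apply] at this
      rw [zero_apply]
      linarith
  have hAA : Aᵀ * A = 1 + Bᵀ * B := by
    have h1 := congrArg (map · re) hg
    simp only [map_re_mul, transpose_map, ← hA, ← hB, Matrix.map_one re zero_re one_re] at h1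
    rwa [sub_eq_iff_eq_add] at h1
  have hBX : B * X = 0 := by rw [mul_fromCols, hBW.1, hBW.2, fromCols_zero]
  obtain ⟨Q, hQ, hQX⟩ := exists_mem_unitaryGroup_mul_eq_of_conjTranspose_mul_self_eq
    (X := X) (Y := A * X) <| by
      simp only [conjTranspose_eq_transpose_of_trivial, transpose_mul, Matrix.mul_assoc]
      rw [← Matrix.mul_assoc Aᵀ, hAA, Matrix.add_mul, Matrix.one_mul, Matrix.mul_add,
        Matrix.mul_assoc, ← Matrix.mul_assoc Xᵀ, ← transpose_mul, hBX]
      simp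
  rw [mul_fromCols, mul_fromCols, fromCols_ext_iff] at hQX
  refine ⟨Q.map ofReal, fun i j => ofReal_im _, ?_, ext_re_im ?_ ?_⟩
  · have := congrArg ofRealHom.mapMatrix (mem_unitaryGroup_iff'.mp hQ)
    rwa [map_mul, map_one, star_eq_conjTranspose, conjTranspose_eq_transpose_of_trivial] at this
  · rw [map_re_mul, map_re_mul, map_ofReal_map_re, map_ofReal_map_im, ← hA, ← hB, hQX.1, hBW.2,
      Matrix.zero_mul, sub_zero]
  · rw [map_im_mul, map_im_mul, map_ofReal_map_re, map_ofReal_map_im, ← hA, ← hB, hQX.2, hBW.1,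
      Matrix.zero_mul, add_zero]

end Complex

/-- Lemma 4.2 (ii): if `W W*` is real, then `f_W(g) = f_W(e)` for `g ∈ O_l(ℂ)` if and
only if `g = g₁ · s` with `g₁ ∈ O_l(ℝ)` and `s ∈ Stab(W) = {s ∈ O_l(ℂ) ∣ sW = W}`. -/
theorem kempfNess_equality_iff {l n : ℕ} (W : Matrix (Fin l) (Fin n) ℂ)
    (hW : ∀ i j, ((W * Wᴴ) i j).im = 0)
    (g : Matrix (Fin l) (Fin l) ℂ) (hg : gᵀ * g = 1) :
    ((g * W)ᴴ * (g * W)).trace = (Wᴴ * W).trace ↔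
      ∃ g₁ s : Matrix (Fin l) (Fin l) ℂ,
        (∀ i j, (g₁ i j).im = 0) ∧ g₁ᵀ * g₁ = 1 ∧
        sᵀ * s = 1 ∧ s * W = W ∧ g = g₁ * s := by
  have hWsymm := isSymm_of_isHermitian_of_im_eq_zero (isHermitian_mul_conjTranspose_self W) hW
  constructor
  · intro h
    obtain ⟨g₁, him, hg₁, hg₁W⟩ := exists_real_orthogonal_mul_eq_of_map_star_mul_eq hg
      ((trace_conjTranspose_mul_self_eq_iff_map_star_mul_eq hg hWsymm).mp h)
    have hg₁' : g₁ * g₁ᵀ = 1 := mul_eq_one_comm.mp hg₁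
    refine ⟨g₁, g₁ᵀ * g, him, hg₁, ?_, ?_, ?_⟩
    · rw [transpose_mul, transpose_transpose, Matrix.mul_assoc, ← Matrix.mul_assoc g₁, hg₁',
        Matrix.one_mul, hg]
    · rw [Matrix.mul_assoc, ← hg₁W, ← Matrix.mul_assoc, hg₁, Matrix.one_mul]
    · rw [← Matrix.mul_assoc, hg₁', Matrix.one_mul]
  · rintro ⟨g₁, s, him, hg₁, -, hsW, rfl⟩
    have hg₁H : g₁ᴴ = g₁ᵀ := by
      ext i j
      exact Complex.conj_eq_iff_im.mpr (him j i)
    rw [Matrix.mul_assoc, hsW, conjTranspose_mul, hg₁H, Matrix.mul_assoc, ← Matrix.mul_assoc g₁ᵀ,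
      hg₁, Matrix.one_mul]
end

section
/- Let $W \in \mathbb{C}^{l \times n}$, write $W = V + \mathfrak{i} T$ with $V, T$ real, and define $f_W(g) = \mathrm{tr}((gW)^* gW)$ on $O_l(\mathbb{C})$. Then the identity $e$ is a critical point of $f_W$ (the derivative of $f_W$ at $e$ vanishes on all skew-symmetric complex matrices, the tangent space of $O_l(\mathbb{C})$ at $e$) if and only if $WW^*$ has real entries. -/
/-!
Moving `W` around the trace, the derivative is `Z ↦ tr(A (Z + Zᴴ))` with `A = W Wᴴ`. For
skew-symmetric `Z` the matrix `Z + Zᴴ` is again skew-symmetric, and the trace of a symmetric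
matrix times a skew-symmetric one vanishes; conversely, the skew-symmetric choice
`Z = i (E_ij - E_ji)` gives `Z + Zᴴ = 2Z` and extracts `A_ji - A_ij`. So the derivative vanishes
on skew-symmetric matrices exactly when `A` is symmetric, which for the Hermitian matrix `A`
means that its entries are real.
-/

open Matrix

namespace Matrix

variable {n : Type*}

theorem transpose_conjTranspose_eq_neg {α : Type*} [AddGroup α] [StarAddMonoid α]
    {Z : Matrix n n α} (hZ : Zᵀ = -Z) : Zᴴᵀ = -Zᴴ := by
  rw [← conjTranspose_transpose_eq_transpose_conjTranspose, hZ, conjTranspose_neg]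

variable [Fintype n]

theorem trace_mul_eq_zero_of_isSymm_of_transpose_eq_neg {R : Type*} [CommRing R]
    [IsAddTorsionFree R] {A M : Matrix n n R} (hA : A.IsSymm) (hM : Mᵀ = -M) :
    (A * M).trace = 0 := by
  have h : (A * M).trace = -(A * M).trace :=
    calc (A * M).trace = (A * M)ᵀ.trace := (trace_transpose _).symm
      _ = -(A * M).trace := by rw [transpose_mul, hM, hA.eq, neg_mul, trace_neg, trace_mul_comm]
  rw [← two_nsmul_eq_zero, two_nsmul]
  exact add_eq_zero_iff_eq_neg.mpr h

variable [DecidableEq n]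

theorem trace_mul_single_sub_single {R : Type*} [CommRing R] (A : Matrix n n R) (i j : n)
    (c : R) : (A * (single i j c - single j i c)).trace = c * (A j i - A i j) := by
  simp only [mul_sub, trace_sub, trace_mul_single, op_smul_eq_mul]
  ring

theorem isSymm_of_forall_trace_mul_add_conjTranspose_eq_zero {A : Matrix n n ℂ}
    (h : ∀ Z : Matrix n n ℂ, Zᵀ = -Z → (A * (Z + Zᴴ)).trace = 0) : A.IsSymm := by
  refine IsSymm.ext fun i j => ?_
  set Z : Matrix n n ℂ := Complex.I • (single i j 1 - single j i 1)
  have hZ : Zᵀ = -Z := by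
    simp only [Z, transpose_smul, transpose_sub, transpose_single, ← smul_neg, neg_sub]
  have hZH : Zᴴ = Z := by
    simp only [Z, conjTranspose_smul, conjTranspose_sub, conjTranspose_single, star_one,
      Complex.star_def, Complex.conj_I, neg_smul, ← smul_neg, neg_sub]
  have htrace : (A * (Z + Zᴴ)).trace = 2 * Complex.I * (A j i - A i j) := by
    rw [hZH, ← two_smul ℂ Z, mul_smul_comm, trace_smul, mul_smul_comm, trace_smul,
      trace_mul_single_sub_single, smul_eq_mul, smul_eq_mul]
    ring
  have h2I : 2 * Complex.I ≠ 0 := mul_ne_zero two_ne_zero Complex.I_ne_zero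
  rw [h Z hZ, eq_comm, mul_eq_zero, or_iff_right h2I, sub_eq_zero] at htrace
  exact htrace

theorem forall_trace_mul_add_conjTranspose_eq_zero_iff_isSymm (A : Matrix n n ℂ) :
    (∀ Z : Matrix n n ℂ, Zᵀ = -Z → (A * (Z + Zᴴ)).trace = 0) ↔ A.IsSymm := by
  refine ⟨isSymm_of_forall_trace_mul_add_conjTranspose_eq_zero, fun hA Z hZ => ?_⟩
  refine trace_mul_eq_zero_of_isSymm_of_transpose_eq_neg hA ?_
  rw [transpose_add, hZ, transpose_conjTranspose_eq_neg hZ, neg_add]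

end Matrix

theorem Matrix.IsHermitian.isSymm_iff_forall_im_eq_zero {n : Type*} {A : Matrix n n ℂ}
    (hA : A.IsHermitian) : A.IsSymm ↔ ∀ i j, (A i j).im = 0 := by
  refine IsSymm.ext_iff.trans (forall₂_congr fun i j => ?_)
  rw [← hA.apply j i, Complex.star_def, Complex.conj_eq_iff_im]

/-- Equation (4.8): the identity is a critical point of `f_W(g) = tr((gW)* gW)` on
`O_l(ℂ)` (the derivative `Z ↦ tr(W*(Z + Z*)W)` vanishes on all skew-symmetric complex
matrices, the tangent space at the identity) if and only if `W W*` is real. -/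
theorem critical_point_iff_real {l n : ℕ} (W : Matrix (Fin l) (Fin n) ℂ) :
    (∀ Z : Matrix (Fin l) (Fin l) ℂ, Zᵀ = -Z →
        (Wᴴ * (Z + Zᴴ) * W).trace = 0) ↔
      ∀ i j, ((W * Wᴴ) i j).im = 0 := by
  simp only [trace_mul_cycle Wᴴ]
  rw [forall_trace_mul_add_conjTranspose_eq_zero_iff_isSymm,
    (isHermitian_mul_conjTranspose_self W).isSymm_iff_forall_im_eq_zero]
end

section
/- Let $g = X + \mathfrak{i}Y \in O_l(\mathbb{C})$ with $X, Y$ real matrices, and let $V \in \mathbb{R}^{l \times n}$. Then $\mathrm{tr}((gV)^* gV) = \mathrm{tr}(VV^T) + 2\,\mathrm{tr}(Y^T Y V V^T) \geq \mathrm{tr}(VV^T)$, with equality if and only if $YV = 0$. -/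
open Matrix
open scoped ComplexOrder

lemma tlb_map_mul {a b c : ℕ} (A : Matrix (Fin a) (Fin b) ℝ) (B : Matrix (Fin b) (Fin c) ℝ) :
    (A * B).map Complex.ofReal = A.map Complex.ofReal * B.map Complex.ofReal :=
  Matrix.map_mul (f := Complex.ofRealHom)

lemma tlb_trace_map {a : ℕ} (A : Matrix (Fin a) (Fin a) ℝ) :
    (A.map Complex.ofReal).trace = Complex.ofReal A.trace := by
  simp [Matrix.trace, Matrix.diag, Matrix.map_apply]

lemma tlb_map_add {a b : ℕ} (A B : Matrix (Fin a) (Fin b) ℝ) :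
    (A + B).map Complex.ofReal = A.map Complex.ofReal + B.map Complex.ofReal :=
  Matrix.map_add _ Complex.ofReal_add A B

lemma tlb_map_sub {a b : ℕ} (A B : Matrix (Fin a) (Fin b) ℝ) :
    (A - B).map Complex.ofReal = A.map Complex.ofReal - B.map Complex.ofReal :=
  Matrix.map_sub _ Complex.ofReal_sub A B

lemma tlb_conjT_map {a b : ℕ} (A : Matrix (Fin a) (Fin b) ℝ) :
    (A.map Complex.ofReal)ᴴ = Aᵀ.map Complex.ofReal := by
  ext i j
  simp [Matrix.conjTranspose_apply, Matrix.map_apply]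

lemma tlb_expand2 {m : ℕ} (A B : Matrix (Fin m) (Fin m) ℂ) :
    (A + Complex.I • B)ᵀ * (A + Complex.I • B)
      = (Aᵀ * A - Bᵀ * B) + Complex.I • (Aᵀ * B + Bᵀ * A) := by
  rw [Matrix.transpose_add, Matrix.transpose_smul, Matrix.add_mul, Matrix.mul_add, Matrix.mul_add,
    Matrix.smul_mul, Matrix.smul_mul, Matrix.mul_smul, Matrix.mul_smul, smul_smul,
    Complex.I_mul_I]
  module

lemma tlb_expandH {m : ℕ} (A B : Matrix (Fin m) (Fin m) ℂ) :
    (Aᵀ - Complex.I • Bᵀ) * (A + Complex.I • B)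
      = (Aᵀ * A + Bᵀ * B) + Complex.I • (Aᵀ * B - Bᵀ * A) := by
  rw [Matrix.sub_mul, Matrix.mul_add, Matrix.mul_add, Matrix.smul_mul, Matrix.smul_mul,
    Matrix.mul_smul, Matrix.mul_smul, smul_smul, Complex.I_mul_I]
  module

lemma tlb_sandwich {a b : ℕ} (M : Matrix (Fin b) (Fin a) ℂ) (P Q : Matrix (Fin a) (Fin a) ℂ)
    (N : Matrix (Fin a) (Fin b) ℂ) :
    M * ((P + Complex.I • Q) * N) = M * P * N + Complex.I • (M * Q * N) := by
  rw [Matrix.add_mul, Matrix.smul_mul, Matrix.mul_add, Matrix.mul_smul, ← Matrix.mul_assoc,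
    ← Matrix.mul_assoc]

/-- Equation (4.9): for `g = X + iY ∈ O_l(ℂ)` with `X, Y` real and `V` a real matrix,
`tr((gV)* gV) = tr(V Vᵀ) + 2 tr(Yᵀ Y V Vᵀ) ≥ tr(V Vᵀ)`, with equality iff `Y V = 0`. -/
theorem trace_lower_bound {l n : ℕ} (X Y : Matrix (Fin l) (Fin l) ℝ)
    (V : Matrix (Fin l) (Fin n) ℝ)
    (hg : (X.map (Complex.ofReal) + Complex.I • Y.map (Complex.ofReal))ᵀ *
        (X.map (Complex.ofReal) + Complex.I • Y.map (Complex.ofReal)) = 1) :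
    (((X.map (Complex.ofReal) + Complex.I • Y.map (Complex.ofReal)) * V.map (Complex.ofReal))ᴴ *
        ((X.map (Complex.ofReal) + Complex.I • Y.map (Complex.ofReal)) * V.map (Complex.ofReal))).trace
      = ((V * Vᵀ).trace : ℝ) + 2 * ((Yᵀ * Y * (V * Vᵀ)).trace : ℝ) ∧
    (((V * Vᵀ).trace : ℝ) : ℂ) ≤
      (((X.map (Complex.ofReal) + Complex.I • Y.map (Complex.ofReal)) * V.map (Complex.ofReal))ᴴ *
        ((X.map (Complex.ofReal) + Complex.I • Y.map (Complex.ofReal)) * V.map (Complex.ofReal))).trace ∧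
    ((((X.map (Complex.ofReal) + Complex.I • Y.map (Complex.ofReal)) * V.map (Complex.ofReal))ᴴ *
        ((X.map (Complex.ofReal) + Complex.I • Y.map (Complex.ofReal)) * V.map (Complex.ofReal))).trace
      = (((V * Vᵀ).trace : ℝ) : ℂ) ↔ Y * V = 0) := by
  have hexp : ((Xᵀ*X - Yᵀ*Y).map Complex.ofReal) + Complex.I • ((Xᵀ*Y + Yᵀ*X).map Complex.ofReal)
      = (1 : Matrix (Fin l) (Fin l) ℂ) := by
    rw [tlb_expand2] at hg
    rw [← hg]
    simp only [tlb_map_mul, tlb_map_add, tlb_map_sub, Matrix.transpose_map]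
  have h1 : Xᵀ*X = 1 + Yᵀ*Y := by
    ext i j
    have hij := congrFun (congrFun hexp i) j
    simp only [Matrix.add_apply, Matrix.smul_apply, Matrix.map_apply, Matrix.sub_apply,
      smul_eq_mul] at hij
    have hre := congrArg Complex.re hij
    simp only [Matrix.one_apply, Matrix.add_apply] at hre ⊢
    rcases eq_or_ne i j with h | h <;> simp [h] at hre ⊢ <;> linarith
  have h2 : Xᵀ*Y + Yᵀ*X = 0 := by
    ext i j
    have hij := congrFun (congrFun hexp i) j
    simp only [Matrix.add_apply, Matrix.smul_apply, Matrix.map_apply, Matrix.sub_apply,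
      smul_eq_mul] at hij
    have him := congrArg Complex.im hij
    simp only [Matrix.one_apply, Matrix.add_apply, Matrix.zero_apply] at him ⊢
    rcases eq_or_ne i j with h | h <;> simp [h] at him ⊢ <;> linarith
  -- the key matrix identity
  have hprod : ((X.map Complex.ofReal + Complex.I • Y.map Complex.ofReal) * V.map Complex.ofReal)ᴴ
        * ((X.map Complex.ofReal + Complex.I • Y.map Complex.ofReal) * V.map Complex.ofReal)
      = ((Vᵀ*(Xᵀ*X + Yᵀ*Y)*V).map Complex.ofReal)
        + Complex.I • ((Vᵀ*(Xᵀ*Y - Yᵀ*X)*V).map Complex.ofReal) := by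
    rw [Matrix.conjTranspose_mul, Matrix.conjTranspose_add, Matrix.conjTranspose_smul,
      Complex.star_def, Complex.conj_I, tlb_conjT_map, tlb_conjT_map, tlb_conjT_map,
      neg_smul, ← sub_eq_add_neg, Matrix.mul_assoc, ← Matrix.mul_assoc
        (Xᵀ.map Complex.ofReal - Complex.I • Yᵀ.map Complex.ofReal)]
    rw [show Xᵀ.map Complex.ofReal = (X.map Complex.ofReal)ᵀ from Matrix.transpose_map,
      show Yᵀ.map Complex.ofReal = (Y.map Complex.ofReal)ᵀ from Matrix.transpose_map,
      tlb_expandH, tlb_sandwich]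
    simp only [tlb_map_mul, tlb_map_add, tlb_map_sub, Matrix.transpose_map]
  -- trace of the imaginary part vanishes
  have him0 : (Vᵀ*(Xᵀ*Y - Yᵀ*X)*V).trace = 0 := by
    have h3 : (Vᵀ*(Xᵀ*Y)*V).trace = (Vᵀ*(Yᵀ*X)*V).trace := by
      conv_lhs => rw [← Matrix.trace_transpose]
      congr 1
      simp [Matrix.transpose_mul, Matrix.mul_assoc]
    rw [Matrix.mul_sub, Matrix.sub_mul, Matrix.trace_sub, h3, sub_self]
  -- main trace identity over ℝ
  have hre : (Vᵀ*(Xᵀ*X + Yᵀ*Y)*V).trace = (V * Vᵀ).trace + 2 * (Yᵀ * Y * (V * Vᵀ)).trace := by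
    have hsplit : Vᵀ*(Xᵀ*X + Yᵀ*Y)*V = Vᵀ*V + (Vᵀ*(Yᵀ*Y)*V + Vᵀ*(Yᵀ*Y)*V) := by
      rw [h1]
      rw [Matrix.mul_add, Matrix.mul_add, Matrix.mul_one, Matrix.add_mul, Matrix.add_mul]
      abel
    rw [hsplit, Matrix.trace_add, Matrix.trace_add]
    have e1 : (Vᵀ*V).trace = (V*Vᵀ).trace := Matrix.trace_mul_comm _ _
    have e2 : (Vᵀ*(Yᵀ*Y)*V).trace = (Yᵀ*Y*(V*Vᵀ)).trace := by
      rw [Matrix.trace_mul_comm, ← Matrix.mul_assoc]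
      exact Matrix.trace_mul_comm _ _
    rw [e1, e2]; ring
  have hmain : (((X.map Complex.ofReal + Complex.I • Y.map Complex.ofReal) * V.map Complex.ofReal)ᴴ
        * ((X.map Complex.ofReal + Complex.I • Y.map Complex.ofReal) * V.map Complex.ofReal)).trace
      = Complex.ofReal ((V * Vᵀ).trace + 2 * (Yᵀ * Y * (V * Vᵀ)).trace) := by
    rw [hprod, Matrix.trace_add, Matrix.trace_smul, tlb_trace_map, tlb_trace_map, him0, hre]
    simp
  -- positivity of the correction term, via sum of squares
  have hs : (Yᵀ * Y * (V * Vᵀ)).trace = ∑ j, ∑ i, (Y*V) i j * (Y*V) i j := by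
    have hW : Yᵀ * Y * (V * Vᵀ) = (Yᵀ*Y*V)*Vᵀ := by rw [Matrix.mul_assoc (Yᵀ*Y) V Vᵀ]
    have hW2 : (Y*V)ᵀ*(Y*V) = Vᵀ*(Yᵀ*Y*V) := by
      rw [Matrix.transpose_mul, Matrix.mul_assoc, ← Matrix.mul_assoc Yᵀ Y V]
    rw [hW, ← Matrix.trace_mul_comm, ← hW2]
    set W := Y*V with hWdef
    simp [Matrix.trace, Matrix.diag, Matrix.mul_apply, Matrix.transpose_apply]
  have hs0 : 0 ≤ (Yᵀ * Y * (V * Vᵀ)).trace := by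
    rw [hs]
    exact Finset.sum_nonneg fun j _ => Finset.sum_nonneg fun i _ => mul_self_nonneg _
  refine ⟨by rw [hmain]; push_cast; ring, ?_, ?_⟩
  · rw [hmain, Complex.real_le_real]
    linarith
  · rw [hmain, Complex.ofReal_inj]
    constructor
    · intro h
      have hz : (Yᵀ * Y * (V * Vᵀ)).trace = 0 := by linarith
      rw [hs] at hz
      ext i j
      have hj := (Finset.sum_eq_zero_iff_of_nonneg (fun j _ =>
        Finset.sum_nonneg (fun i _ => mul_self_nonneg ((Y*V) i j)))).mp hz j (Finset.mem_univ j)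
      have hij := (Finset.sum_eq_zero_iff_of_nonneg (fun i _ =>
        mul_self_nonneg ((Y*V) i j))).mp hj i (Finset.mem_univ i)
      simpa using mul_self_eq_zero.mp hij
    · intro h
      rw [show Yᵀ * Y * (V * Vᵀ) = Yᵀ * ((Y*V) * Vᵀ) by
        rw [Matrix.mul_assoc, ← Matrix.mul_assoc Y V Vᵀ], h]
      simp
end

section
/- Let $V \in \mathbb{R}^{l\times n}$ and $g \in O_l(\mathbb{C})$ be such that $gV$ is a real matrix. Then there exists $g_1 \in O_l(\mathbb{R})$ such that $g_1 g V = V$; in particular $g \in O_l(\mathbb{R}) \cdot \mathrm{Stab}(V)$ where $\mathrm{Stab}(V) = \{s \in O_l(\mathbb{C}) \mid sV = V\}$. -/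
open Matrix

/-!
Since `g` is complex orthogonal, the real matrix `W := gV` has the same Gram matrix as `V`:
`WᵀW = Vᵀgᵀg V = VᵀV`. Hence `‖Wx‖ = ‖Vx‖` for every `x`, so `Wx ↦ Vx` is a well-defined linear
isometry from the column space of `W` onto that of `V`; extending it to all of `ℝˡ` gives
`g₁ ∈ O_l(ℝ)` with `g₁ W = V`. The factorisation is then `g = g₁ᵀ (g₁ g)` with `g₁ g ∈ Stab(V)`.
-/

theorem LinearMap.exists_linearIsometry_comp_eq_of_norm_eq {𝕜 F E : Type*} [RCLike 𝕜]
    [AddCommGroup F] [Module 𝕜 F] [NormedAddCommGroup E] [InnerProductSpace 𝕜 E]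
    [FiniteDimensional 𝕜 E] (S T : F →ₗ[𝕜] E) (h : ∀ x, ‖S x‖ = ‖T x‖) :
    ∃ L : E →ₗᵢ[𝕜] E, L.toLinearMap ∘ₗ S = T := by
  have hker : ker S ≤ ker T := fun x hx => by
    rw [mem_ker, ← norm_eq_zero, ← h, norm_eq_zero]
    exact hx
  let f : range S →ₗ[𝕜] E := (ker S).liftQ T hker ∘ₗ S.quotKerEquivRange.symm.toLinearMap
  have hf : ∀ x, f ⟨S x, mem_range_self S x⟩ = T x := fun x => by simp [f]
  let L : range S →ₗᵢ[𝕜] E := ⟨f, by rintro ⟨_, x, rfl⟩; rw [hf]; exact (h x).symm⟩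
  exact ⟨L.extend, LinearMap.ext fun x => (L.extend_apply ⟨S x, _⟩).trans (hf x)⟩

section RCLike

variable {𝕜 m n : Type*} [RCLike 𝕜] [Fintype m] [DecidableEq m] [Fintype n] [DecidableEq n]

theorem Matrix.inner_toEuclideanLin_self (A : Matrix m n 𝕜) (x : EuclideanSpace 𝕜 n) :
    inner 𝕜 (toEuclideanLin A x) (toEuclideanLin A x) =
      inner 𝕜 (toEuclideanLin (Aᴴ * A) x) x := by
  rw [toLpLin_mul (q := 2), LinearMap.comp_apply, toEuclideanLin_conjTranspose_eq_adjoint,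
    LinearMap.adjoint_inner_left]

theorem Matrix.exists_mem_unitaryGroup_mul_eq_of_conjTranspose_mul_self_eq_s12
    {A B : Matrix m n 𝕜} (h : Aᴴ * A = Bᴴ * B) : ∃ U ∈ unitaryGroup m 𝕜, U * A = B := by
  obtain ⟨L, hL⟩ := LinearMap.exists_linearIsometry_comp_eq_of_norm_eq (toEuclideanLin A)
    (toEuclideanLin B) fun x => by
      rw [norm_eq_sqrt_re_inner (𝕜 := 𝕜), norm_eq_sqrt_re_inner (𝕜 := 𝕜),
        inner_toEuclideanLin_self, inner_toEuclideanLin_self, h]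
  let b := (EuclideanSpace.basisFun m 𝕜).toBasis
  refine ⟨LinearMap.toMatrix b b L.toLinearMap, ?_, toEuclideanLin.injective ?_⟩
  · exact (L.toLinearIsometryEquiv rfl).toMatrix_mem_unitaryGroup _ _
  · rw [toLpLin_mul (q := 2), ← hL]
    exact congrArg (· ∘ₗ toEuclideanLin A) (Matrix.toLin_toMatrix b b _)

end RCLike

theorem Matrix.exists_orthogonal_mul_eq_of_transpose_mul_self_eq {m n : Type*} [Fintype m]
    [DecidableEq m] [Fintype n] [DecidableEq n] {A B : Matrix m n ℝ} (h : Aᵀ * A = Bᵀ * B) :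
    ∃ G : Matrix m m ℝ, Gᵀ * G = 1 ∧ G * A = B := by
  obtain ⟨G, hG, hGA⟩ := exists_mem_unitaryGroup_mul_eq_of_conjTranspose_mul_self_eq_s12
    (A := A) (B := B) (by simpa only [conjTranspose_eq_transpose_of_trivial] using h)
  exact ⟨G, by simpa [star_eq_conjTranspose] using mem_unitaryGroup_iff'.mp hG, hGA⟩

theorem Matrix.map_ofReal_mul {l m n : Type*} [Fintype m] (A : Matrix l m ℝ) (B : Matrix m n ℝ) :
    (A * B).map Complex.ofReal = A.map Complex.ofReal * B.map Complex.ofReal :=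
  Matrix.map_mul (f := Complex.ofRealHom)

/-- If `V` is real and `g ∈ O_l(ℂ)` is such that `gV` is real, then there is a real
orthogonal `g₁` with `g₁ g V = V`; in particular `g ∈ O_l(ℝ) · Stab(V)`. -/
theorem real_image_implies_real_orthogonal {l n : ℕ} (V : Matrix (Fin l) (Fin n) ℝ)
    (g : Matrix (Fin l) (Fin l) ℂ) (hg : gᵀ * g = 1)
    (hreal : ∀ i j, ((g * V.map (Complex.ofReal)) i j).im = 0) :
    (∃ g₁ : Matrix (Fin l) (Fin l) ℝ, g₁ᵀ * g₁ = 1 ∧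
        g₁.map (Complex.ofReal) * g * V.map (Complex.ofReal) = V.map (Complex.ofReal)) ∧
    ∃ g₂ s : Matrix (Fin l) (Fin l) ℂ,
      (∀ i j, (g₂ i j).im = 0) ∧ g₂ᵀ * g₂ = 1 ∧
      sᵀ * s = 1 ∧ s * V.map (Complex.ofReal) = V.map (Complex.ofReal) ∧ g = g₂ * s := by
  set Vc := V.map Complex.ofReal
  set W := (g * Vc).map Complex.re
  have hW : W.map Complex.ofReal = g * Vc :=
    ext fun i j => Complex.ext (by simp [W]) (by simp [W, hreal i j])
  have hgram : Wᵀ * W = Vᵀ * V := by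
    apply map_injective Complex.ofReal_injective
    dsimp only
    rw [map_ofReal_mul, map_ofReal_mul, transpose_map, transpose_map, hW, transpose_mul,
      Matrix.mul_assoc, ← Matrix.mul_assoc gᵀ, hg, Matrix.one_mul]
  obtain ⟨G, hG, hGW⟩ := exists_orthogonal_mul_eq_of_transpose_mul_self_eq hgram
  set Gc := G.map Complex.ofReal
  have hGc : Gcᵀ * Gc = 1 := by rw [← transpose_map, ← map_ofReal_mul, hG]; simp
  have hstab : Gc * g * Vc = Vc := by rw [Matrix.mul_assoc, ← hW, ← map_ofReal_mul, hGW]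
  refine ⟨⟨G, hG, hstab⟩, Gcᵀ, Gc * g, fun i j => by simp [Gc], ?_, ?_, hstab, ?_⟩
  · rw [transpose_transpose]
    exact mul_eq_one_comm.mp hGc
  · rw [transpose_mul, Matrix.mul_assoc, ← Matrix.mul_assoc Gcᵀ, hGc, Matrix.one_mul, hg]
  · rw [← Matrix.mul_assoc, hGc, Matrix.one_mul]
end
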